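/- arXiv:2003.07601 — 3 statements merged into one kernel-verified Lean document; each statement's English description precedes it below -/
import Mathlib

section
/- Let f : ℝ → ℝ be continuous and define F(s) = ∫₀^s f(t) dt. Let p > 1 and τ > 0. Assume that F(s)/s^p → +∞ as s → +∞, and that there exists c₀ > 0 with liminf_{s→+∞} (f(s)·s − p·F(s))/s^τ ≥ c₀. Then f(s)/s^{p-1} → +∞ as s → +∞. -/
open Filter

/-- Hypotheses H(ii) and H(iii) imply that `f` is `(p-1)`-superlinear at `+∞`:
if `F(s)/s^p → +∞` and `liminf_{s→+∞} (f(s)s - pF(s))/s^τ ≥ c₀ > 0`,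
then `f(s)/s^{p-1} → +∞` as `s → +∞`. -/
theorem stmt_0 (f : ℝ → ℝ) (hf : Continuous f)
    (F : ℝ → ℝ) (hF : ∀ s, F s = ∫ t in (0:ℝ)..s, f t)
    (p τ : ℝ) (hp : 1 < p) (hτ : 0 < τ)
    (hFsup : Tendsto (fun s => F s / s ^ p) atTop atTop)
    (c₀ : ℝ) (hc₀ : 0 < c₀)
    (hliminf : c₀ ≤ liminf (fun s => (f s * s - p * F s) / s ^ τ) atTop) :
    Tendsto (fun s => f s / s ^ (p - 1)) atTop atTop := by
  have hhalf : (0:ℝ) < c₀ / 2 := by positivity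
  have hev : ∀ᶠ s in atTop, c₀ / 2 ≤ (f s * s - p * F s) / s ^ τ := by
    by_contra h
    have hS : ∀ a ∈ {a : ℝ | ∀ᶠ s in atTop, a ≤ (f s * s - p * F s) / s ^ τ},
        a ≤ c₀ / 2 := by
      intro a ha
      by_contra hle
      push_neg at hle
      exact h (ha.mono fun s hs => le_trans hle.le hs)
    have hlim : liminf (fun s => (f s * s - p * F s) / s ^ τ) atTop ≤ c₀ / 2 := by
      rw [Filter.liminf_eq]
      exact Real.sSup_le hS hhalf.le
    linarith
  have key : ∀ᶠ s in atTop, p * (F s / s ^ p) ≤ f s / s ^ (p - 1) := by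
    filter_upwards [hev, eventually_gt_atTop (0:ℝ)] with s hs hs0
    have hsp : (0:ℝ) < s ^ p := Real.rpow_pos_of_pos hs0 p
    have hsτ : (0:ℝ) < s ^ τ := Real.rpow_pos_of_pos hs0 τ
    have h1 : c₀ / 2 * s ^ τ ≤ f s * s - p * F s := (le_div_iff₀ hsτ).mp hs
    have h1' : (0:ℝ) ≤ c₀ / 2 * s ^ τ := by positivity
    have h2 : p * F s ≤ f s * s := by linarith
    have h3 : s ^ (p - 1) = s ^ p / s := by
      rw [Real.rpow_sub hs0, Real.rpow_one]
    rw [h3, div_div_eq_mul_div, ← mul_div_assoc]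
    exact (div_le_div_iff_of_pos_right hsp).mpr h2
  have hmain : Tendsto (fun s => p * (F s / s ^ p)) atTop atTop :=
    hFsup.const_mul_atTop (by linarith : (0:ℝ) < p)
  exact tendsto_atTop_mono' atTop key hmain
end

section
/- Let f : ℝ → ℝ be continuous with f(0) = 0, let p > 1 and let τ ∈ (1, p). Assume: (i) liminf_{s→0⁺} f(s)/s^{τ-1} ≥ η̂ for some η̂ > 0; (ii) f(s) > 0 for all s > 0; and (iii) f(s)/s^{p-1} → +∞ as s → +∞. Then there exists λ̂ > 0 such that s^{p-1} ≤ λ̂·f(s) for all s ≥ 0. -/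
open Filter

/-- Inequality (17) in the proof that `λ* < ∞`: under the near-zero estimate,
positivity on `(0,∞)` and `(p-1)`-superlinearity at `+∞`, there is `λ̂ > 0`
with `s^{p-1} ≤ λ̂ f(s)` for all `s ≥ 0`. -/
theorem stmt_4 (f : ℝ → ℝ) (hf : Continuous f) (hf0 : f 0 = 0)
    (p τ : ℝ) (hp : 1 < p) (hτ1 : 1 < τ) (hτp : τ < p)
    (η : ℝ) (hη : 0 < η)
    (hliminf : η ≤ liminf (fun s => f s / s ^ (τ - 1)) (nhdsWithin 0 (Set.Ioi 0)))
    (hpos : ∀ s : ℝ, 0 < s → 0 < f s)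
    (hsup : Tendsto (fun s => f s / s ^ (p - 1)) atTop atTop) :
    ∃ lam > (0:ℝ), ∀ s : ℝ, 0 ≤ s → s ^ (p - 1) ≤ lam * f s := by
  have hp1 : (0:ℝ) < p - 1 := by linarith
  have hτ0 : (0:ℝ) < τ - 1 := by linarith
  have hpτ : (0:ℝ) < p - τ := by linarith
  -- near zero: eventually η/2 < f s / s^(τ-1)
  have hbd : IsBoundedUnder (· ≥ ·) (nhdsWithin (0:ℝ) (Set.Ioi 0))
      (fun s => f s / s ^ (τ - 1)) := by
    apply isBoundedUnder_of_eventually_ge (a := 0)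
    filter_upwards [self_mem_nhdsWithin] with s hs
    have hs' : (0:ℝ) < s := hs
    exact div_nonneg (hpos s hs').le (Real.rpow_nonneg hs'.le _)
  have hev : ∀ᶠ s in nhdsWithin (0:ℝ) (Set.Ioi 0), η / 2 < f s / s ^ (τ - 1) :=
    eventually_lt_of_lt_liminf (lt_of_lt_of_le (by linarith) hliminf) hbd
  rw [eventually_nhdsWithin_iff, Metric.eventually_nhds_iff] at hev
  obtain ⟨δ, hδ, hδ'⟩ := hev
  -- at infinity
  obtain ⟨M, hM⟩ := eventually_atTop.mp (hsup.eventually (eventually_ge_atTop 1))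
  set a : ℝ := δ / 2 with ha_def
  have ha : (0:ℝ) < a := by positivity
  set b : ℝ := max M a with hb_def
  have hab : a ≤ b := le_max_right _ _
  -- maximum on the compact middle interval
  have hcont : ContinuousOn (fun s => s ^ (p - 1) / f s) (Set.Icc a b) := by
    apply ContinuousOn.div
    · intro s hs
      exact (Real.continuousAt_rpow_const s (p - 1)
        (Or.inl (ne_of_gt (lt_of_lt_of_le ha hs.1)))).continuousWithinAt
    · exact hf.continuousOn
    · intro s hs
      exact (hpos s (lt_of_lt_of_le ha hs.1)).ne'
  obtain ⟨s₀, hs₀, hC⟩ := isCompact_Icc.exists_isMaxOn ⟨a, le_refl a, hab⟩ hcont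
  set C : ℝ := s₀ ^ (p - 1) / f s₀ with hC_def
  refine ⟨max (max C 1) (a ^ (p - τ) * (2 / η)), ?_, ?_⟩
  · exact lt_of_lt_of_le one_pos ((le_max_right C 1).trans (le_max_left _ _))
  intro s hs
  rcases eq_or_lt_of_le hs with h0 | h0
  · rw [← h0, Real.zero_rpow (by linarith : p - 1 ≠ 0), hf0, mul_zero]
  have hfs : 0 < f s := hpos s h0
  rcases le_or_gt s a with hsa | hsa
  · -- near zero
    have hd : dist s 0 < δ := by
      rw [Real.dist_eq, sub_zero, abs_of_pos h0]
      calc s ≤ δ / 2 := hsa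
        _ < δ := by linarith
    have h1 : η / 2 < f s / s ^ (τ - 1) := hδ' hd h0
    have hrp : (0:ℝ) < s ^ (τ - 1) := Real.rpow_pos_of_pos h0 _
    have h2 : s ^ (τ - 1) ≤ 2 / η * f s := by
      rw [lt_div_iff₀ hrp] at h1
      rw [div_mul_eq_mul_div, le_div_iff₀ hη]
      nlinarith
    have h3 : s ^ (p - τ) ≤ a ^ (p - τ) := Real.rpow_le_rpow h0.le hsa hpτ.le
    have key : s ^ (p - 1) = s ^ (τ - 1) * s ^ (p - τ) := by
      rw [← Real.rpow_add h0]; ring_nf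
    calc s ^ (p - 1) = s ^ (τ - 1) * s ^ (p - τ) := key
      _ ≤ (2 / η * f s) * a ^ (p - τ) :=
        mul_le_mul h2 h3 (Real.rpow_nonneg h0.le _) (by positivity)
      _ = (a ^ (p - τ) * (2 / η)) * f s := by ring
      _ ≤ max (max C 1) (a ^ (p - τ) * (2 / η)) * f s :=
        mul_le_mul_of_nonneg_right (le_max_right _ _) hfs.le
  rcases le_or_gt s b with hsb | hsb
  · -- middle
    have h1 : s ^ (p - 1) / f s ≤ C := hC ⟨hsa.le, hsb⟩
    rw [div_le_iff₀ hfs] at h1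
    calc s ^ (p - 1) ≤ C * f s := h1
      _ ≤ max (max C 1) (a ^ (p - τ) * (2 / η)) * f s :=
        mul_le_mul_of_nonneg_right ((le_max_left C 1).trans (le_max_left _ _)) hfs.le
  · -- at infinity
    have hsM : M ≤ s := (le_max_left M a).trans hsb.le
    have h1 : (1:ℝ) ≤ f s / s ^ (p - 1) := hM s hsM
    have hrp : (0:ℝ) < s ^ (p - 1) := Real.rpow_pos_of_pos h0 _
    rw [le_div_iff₀ hrp, one_mul] at h1
    calc s ^ (p - 1) ≤ f s := h1
      _ = 1 * f s := (one_mul _).symm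
      _ ≤ max (max C 1) (a ^ (p - τ) * (2 / η)) * f s :=
        mul_le_mul_of_nonneg_right ((le_max_right C 1).trans (le_max_left _ _)) hfs.le
end

section
/- Let p > 1, 1 < q < p, μ ∈ (q, p) and s̃ ∈ (1, p). Define f : ℝ → ℝ by f(s) = 0 for s ≤ 0, f(s) = s^{μ-1} for 0 ≤ s ≤ 1, and f(s) = s^{p-1}·ln(s) + s^{s̃-1} for s > 1, and set F(s) = ∫₀^s f(t) dt. Then f fails the Ambrosetti–Rabinowitz condition: for every μ' > p and every M > 0 there exists s ≥ M such that μ'·F(s) > f(s)·s. -/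
/-!
For `s > 1` the tail `s^{s̃-1}` of `f` is nonnegative and the part of `F` over `[0, 1]` is
nonnegative, so `F(s) ≥ ∫₁ˢ t^{p-1} log t dt ≥ s^p log s / p - s^p / p²`, whereas
`f(s) s = s^p log s + s^{s̃} ≤ s^p (log s + 1)`. Dividing by `s^p`, the claim reduces to
`log s + 1 < μ' (log s / p - 1 / p²)`, which holds for large `s` because `μ' / p > 1`.
-/

open Real Filter Set intervalIntegral

noncomputable def rpowLogPrimitive (p t : ℝ) : ℝ := t ^ p * log t / p - t ^ p / p ^ 2

lemma hasDerivAt_rpowLogPrimitive {p t : ℝ} (hp : p ≠ 0) (ht : 0 < t) :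
    HasDerivAt (rpowLogPrimitive p) (t ^ (p - 1) * log t) t := by
  have hpow : HasDerivAt (fun x : ℝ => x ^ p) (p * t ^ (p - 1)) t :=
    hasDerivAt_rpow_const (Or.inl ht.ne')
  refine (((hpow.mul (hasDerivAt_log ht.ne')).div_const p).sub
    (hpow.div_const (p ^ 2))).congr_deriv ?_
  rw [rpow_sub_one ht.ne']
  field_simp
  ring

lemma integral_rpow_sub_one_mul_log {p a b : ℝ} (hp : p ≠ 0) (ha : 0 < a) (hb : 0 < b) :
    ∫ t in a..b, t ^ (p - 1) * log t = rpowLogPrimitive p b - rpowLogPrimitive p a := by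
  have hpos : ∀ t ∈ uIcc a b, 0 < t := fun t ht => (lt_min ha hb).trans_le ht.1
  refine integral_eq_sub_of_hasDerivAt (fun t ht => hasDerivAt_rpowLogPrimitive hp (hpos t ht))
    (ContinuousOn.intervalIntegrable ?_)
  exact (continuousOn_id.rpow_const fun t ht => Or.inl (hpos t ht).ne').mul
    (continuousOn_log.mono fun t ht => (hpos t ht).ne')

lemma rpowLogPrimitive_one (p : ℝ) : rpowLogPrimitive p 1 = -(1 / p ^ 2) := by
  simp [rpowLogPrimitive]

lemma eventually_mul_add_lt_mul_add {a b c d : ℝ} (hac : a < c) :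
    ∀ᶠ x in atTop, a * x + b < c * x + d := by
  filter_upwards [eventually_gt_atTop ((b - d) / (c - a))] with x hx
  have := (div_lt_iff₀ (sub_pos.mpr hac)).mp hx
  linarith

section Example

variable {p μ st : ℝ} {f : ℝ → ℝ}

lemma intervalIntegrable_zero_one_and_integral_nonneg (hμ : 0 < μ)
    (hf1 : ∀ s : ℝ, 0 ≤ s → s ≤ 1 → f s = s ^ (μ - 1)) :
    IntervalIntegrable f MeasureTheory.volume 0 1 ∧ 0 ≤ ∫ t in (0 : ℝ)..1, f t := by
  have hEq : EqOn (fun t : ℝ => t ^ (μ - 1)) f (uIcc 0 1) := fun t ht => by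
    rw [uIcc_of_le zero_le_one] at ht
    exact (hf1 t ht.1 ht.2).symm
  refine ⟨(intervalIntegral.intervalIntegrable_rpow' (by linarith)).congr
    (hEq.mono uIoc_subset_uIcc), ?_⟩
  rw [← integral_congr hEq]
  exact integral_nonneg zero_le_one fun t ht => rpow_nonneg ht.1 _

lemma integral_rpow_sub_one_mul_log_le_integral (hμ : 0 < μ)
    (hf1 : ∀ s : ℝ, 0 ≤ s → s ≤ 1 → f s = s ^ (μ - 1))
    (hf2 : ∀ s : ℝ, 1 < s → f s = s ^ (p - 1) * log s + s ^ (st - 1))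
    {s : ℝ} (hs : 1 ≤ s) :
    ∫ t in (1 : ℝ)..s, t ^ (p - 1) * log t ≤ ∫ t in (0 : ℝ)..s, f t := by
  set g : ℝ → ℝ := fun t => t ^ (p - 1) * log t + t ^ (st - 1)
  have hpos : ∀ t ∈ uIcc 1 s, 0 < t := fun t ht =>
    lt_of_lt_of_le one_pos ((uIcc_of_le hs ▸ ht).1)
  have hlog_cont : ContinuousOn (fun t : ℝ => t ^ (p - 1) * log t) (uIcc 1 s) :=
    (continuousOn_id.rpow_const fun t ht => Or.inl (hpos t ht).ne').mul
      (continuousOn_log.mono fun t ht => (hpos t ht).ne')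
  have hg_cont : ContinuousOn g (uIcc 1 s) :=
    hlog_cont.add (continuousOn_id.rpow_const fun t ht => Or.inl (hpos t ht).ne')
  have hfg : EqOn f g (uIcc 1 s) := fun t ht => by
    rcases (uIcc_of_le hs ▸ ht).1.eq_or_lt with rfl | h
    · simp [g, hf1 1 zero_le_one le_rfl]
    · exact hf2 t h
  obtain ⟨hf01, h01⟩ := intervalIntegrable_zero_one_and_integral_nonneg hμ hf1
  have hf1s : IntervalIntegrable f MeasureTheory.volume 1 s :=
    hg_cont.intervalIntegrable.congr (hfg.symm.mono uIoc_subset_uIcc)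
  have hmono : ∫ t in (1 : ℝ)..s, t ^ (p - 1) * log t ≤ ∫ t in (1 : ℝ)..s, g t :=
    integral_mono_on hs hlog_cont.intervalIntegrable hg_cont.intervalIntegrable fun t ht =>
      le_add_of_nonneg_right (rpow_nonneg (zero_le_one.trans ht.1) _)
  rw [← integral_add_adjacent_intervals hf01 hf1s, integral_congr hfg]
  linarith

end Example

theorem stmt_11_general (p q μ st : ℝ) (hp : 1 < p) (hq1 : 1 < q)
    (hμq : q < μ) (hstp : st < p)
    (f : ℝ → ℝ)
    (hf1 : ∀ s : ℝ, 0 ≤ s → s ≤ 1 → f s = s ^ (μ - 1))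
    (hf2 : ∀ s : ℝ, 1 < s → f s = s ^ (p - 1) * Real.log s + s ^ (st - 1))
    (F : ℝ → ℝ) (hF : ∀ s, F s = ∫ t in (0:ℝ)..s, f t) :
    ∀ μ' : ℝ, p < μ' → ∀ M : ℝ, 0 < M → ∃ s : ℝ, M ≤ s ∧ f s * s < μ' * F s := by
  intro μ' hμ' M _
  have hp0 : 0 < p := one_pos.trans hp
  have hslope : 1 < μ' / p := (one_lt_div hp0).mpr hμ'
  obtain ⟨s, ⟨hlarge, hsM⟩, hs1⟩ :=
    (((tendsto_log_atTop.eventually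
      (eventually_mul_add_lt_mul_add (b := 1) (d := -(μ' / p ^ 2)) hslope)).and
        (eventually_ge_atTop M)).and (eventually_gt_atTop 1)).exists
  have hs0 : 0 < s := one_pos.trans hs1
  have hFs : rpowLogPrimitive p s ≤ F s := by
    have h := integral_rpow_sub_one_mul_log_le_integral (by linarith) hf1 hf2 hs1.le
    rw [integral_rpow_sub_one_mul_log hp0.ne' one_pos hs0, rpowLogPrimitive_one] at h
    rw [hF]
    linarith [one_div_pos.mpr (pow_pos hp0 2)]
  refine ⟨s, hsM, ?_⟩
  calc f s * s = s ^ p * log s + s ^ st := by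
        rw [hf2 s hs1, rpow_sub_one hs0.ne', rpow_sub_one hs0.ne']
        field_simp
    _ ≤ s ^ p * (1 * log s + 1) := by
        nlinarith [rpow_le_rpow_of_exponent_le hs1.le hstp.le]
    _ < s ^ p * (μ' / p * log s + -(μ' / p ^ 2)) :=
        mul_lt_mul_of_pos_left hlarge (rpow_pos_of_pos hs0 p)
    _ = μ' * rpowLogPrimitive p s := by rw [rpowLogPrimitive]; ring
    _ ≤ μ' * F s := mul_le_mul_of_nonneg_left hFs (by linarith)

/-- The example function from the Remark after hypotheses H fails the
Ambrosetti–Rabinowitz condition: for every `μ' > p` and every `M > 0` there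
exists `s ≥ M` with `μ' F(s) > f(s) s`. -/
theorem stmt_11 (p q μ st : ℝ) (hp : 1 < p) (hq1 : 1 < q) (hqp : q < p)
    (hμq : q < μ) (hμp : μ < p) (hst1 : 1 < st) (hstp : st < p)
    (f : ℝ → ℝ)
    (hf0 : ∀ s : ℝ, s ≤ 0 → f s = 0)
    (hf1 : ∀ s : ℝ, 0 ≤ s → s ≤ 1 → f s = s ^ (μ - 1))
    (hf2 : ∀ s : ℝ, 1 < s → f s = s ^ (p - 1) * Real.log s + s ^ (st - 1))
    (F : ℝ → ℝ) (hF : ∀ s, F s = ∫ t in (0:ℝ)..s, f t) :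
    ∀ μ' : ℝ, p < μ' → ∀ M : ℝ, 0 < M → ∃ s : ℝ, M ≤ s ∧ f s * s < μ' * F s :=
  stmt_11_general p q μ st hp hq1 hμq hstp f hf1 hf2 F hF
end
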